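/- arXiv:math/0509534 — 4 statements merged into one kernel-verified Lean document; each statement's English description precedes it below -/
import Mathlib

section
/- Let N ≥ 1 and let Ω ⊂ ℝ^N be a nonempty bounded open connected set. Let f : ℝ^N → ℝ be measurable with 0 ≤ f(x) ≤ 1 for all x ∈ Ω, and suppose f > 0 on a subset of Ω of positive Lebesgue measure. Then the set { λ > 0 : (S)_λ admits a classical solution on Ω } is bounded above. -/
open Metric MeasureTheory

/-- The Laplacian of `u : ℝ^N → ℝ` at `x`: the sum of the second derivatives of `u`
along the standard orthonormal basis of `ℝ^N`. -/
noncomputable def laplacian {N : ℕ} (u : EuclideanSpace ℝ (Fin N) → ℝ)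
    (x : EuclideanSpace ℝ (Fin N)) : ℝ :=
  ∑ i : Fin N, iteratedFDeriv ℝ 2 u x ![EuclideanSpace.single i 1, EuclideanSpace.single i 1]

/-- `u` is a classical solution of `(S)_λ` on the open set `Ω`:
continuous on the closure, `C²` inside, `0 < u < 1` with `-Δu = λ f/(1-u)²` in `Ω`,
and `u = 0` on the boundary. -/
def IsClassicalSolution {N : ℕ} (Ω : Set (EuclideanSpace ℝ (Fin N)))
    (f : EuclideanSpace ℝ (Fin N) → ℝ) (lam : ℝ)
    (u : EuclideanSpace ℝ (Fin N) → ℝ) : Prop :=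
  ContinuousOn u (closure Ω) ∧ ContDiffOn ℝ 2 u Ω ∧
  (∀ x ∈ Ω, 0 < u x ∧ u x < 1 ∧ -laplacian u x = lam * f x / (1 - u x) ^ 2) ∧
  (∀ x ∈ frontier Ω, u x = 0)
open Set Filter Manifold ContDiff

/-- Smooth Urysohn lemma on a finite-dimensional normed space. -/
lemma smooth_urysohn {E : Type*} [NormedAddCommGroup E] [NormedSpace ℝ E]
    [FiniteDimensional ℝ E] {s t : Set E} (hs : IsClosed s) (ht : IsClosed t)
    (hd : Disjoint s t) :
    ∃ f : E → ℝ, ContDiff ℝ ∞ f ∧ EqOn f 0 s ∧ EqOn f 1 t ∧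
      ∀ x, f x ∈ Icc (0:ℝ) 1 := by
  obtain ⟨f, h0, h1, h01⟩ := exists_contMDiffMap_zero_one_of_isClosed 𝓘(ℝ, E) (n := ⊤) hs ht hd
  exact ⟨f, contMDiff_iff_contDiff.mp f.contMDiff, h0, h1, h01⟩

/-- Gluing: `χ * (indicator Ω u)` is globally `C²` when `χ` is smooth with
`tsupport χ ⊆ Ω` and `u` is `C²` on the open set `Ω`. -/
lemma glue_contDiff {E : Type*} [NormedAddCommGroup E] [NormedSpace ℝ E]
    {Ω : Set E} (hΩ : IsOpen Ω) {u χ : E → ℝ}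
    (hu : ContDiffOn ℝ 2 u Ω) (hχ : ContDiff ℝ ∞ χ)
    (hsupp : tsupport χ ⊆ Ω) :
    ContDiff ℝ 2 (fun x => χ x * Set.indicator Ω u x) := by
  rw [contDiff_iff_contDiffAt]
  intro x
  by_cases hx : x ∈ Ω
  · have h1 : ContDiffAt ℝ 2 (fun y => χ y * u y) x :=
      ((hχ.of_le (by decide)).contDiffAt).mul (hu.contDiffAt (hΩ.mem_nhds hx))
    apply h1.congr_of_eventuallyEq
    filter_upwards [hΩ.mem_nhds hx] with y hy
    simp [Set.indicator_of_mem hy]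
  · have hx' : x ∈ (tsupport χ)ᶜ := fun h => hx (hsupp h)
    apply contDiffAt_const (c := 0) |>.congr_of_eventuallyEq
    filter_upwards [(isClosed_tsupport χ).isOpen_compl.mem_nhds hx'] with y hy
    simp [image_eq_zero_of_notMem_tsupport hy]

/-- Second derivative of `w` in direction `v`, as a function of the base point. -/
noncomputable def sder {N : ℕ} (w : EuclideanSpace ℝ (Fin N) → ℝ)
    (v : EuclideanSpace ℝ (Fin N)) (x : EuclideanSpace ℝ (Fin N)) : ℝ :=
  fderiv ℝ (fun y => fderiv ℝ w y v) x v

/-- A Laplacian built from `sder`. -/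
noncomputable def lapAlt {N : ℕ} (w : EuclideanSpace ℝ (Fin N) → ℝ)
    (x : EuclideanSpace ℝ (Fin N)) : ℝ :=
  ∑ i : Fin N, sder w (EuclideanSpace.single i 1) x

variable {N : ℕ}

lemma sder_cont {w : EuclideanSpace ℝ (Fin N) → ℝ} (hw : ContDiff ℝ 2 w)
    (v : EuclideanSpace ℝ (Fin N)) : Continuous (sder w v) :=
  (((((hw.fderiv_right (m := 1) (by decide)).clm_apply
    contDiff_const).fderiv_right (m := 0) (by decide)).clm_apply contDiff_const)).continuous

lemma lapAlt_cont {w : EuclideanSpace ℝ (Fin N) → ℝ} (hw : ContDiff ℝ 2 w) :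
    Continuous (lapAlt w) :=
  continuous_finset_sum _ fun i _ => sder_cont hw _

lemma sder_hcs {w : EuclideanSpace ℝ (Fin N) → ℝ} (hwc : HasCompactSupport w)
    (v : EuclideanSpace ℝ (Fin N)) : HasCompactSupport (sder w v) :=
  (hwc.fderiv_apply ℝ v).fderiv_apply ℝ v

lemma d2_eq_on {Ω : Set (EuclideanSpace ℝ (Fin N))} (hΩ : IsOpen Ω)
    {u : EuclideanSpace ℝ (Fin N) → ℝ} (hu : ContDiffOn ℝ 2 u Ω)
    {x : EuclideanSpace ℝ (Fin N)} (hx : x ∈ Ω) (v : EuclideanSpace ℝ (Fin N)) :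
    sder u v x = iteratedFDeriv ℝ 2 u x ![v, v] := by
  rw [iteratedFDeriv_two_apply]
  have hdiff : DifferentiableAt ℝ (fderiv ℝ u) x :=
    (((hu.fderiv_of_isOpen hΩ (m := 1) (by decide)).contDiffAt
      (hΩ.mem_nhds hx)).differentiableAt (by decide))
  have h := fderiv_clm_apply hdiff (differentiableAt_const v)
  rw [sder, h]
  simp

lemma green {φ w : EuclideanSpace ℝ (Fin N) → ℝ}
    (hφ : ContDiff ℝ ∞ φ) (hφc : HasCompactSupport φ)
    (hw : ContDiff ℝ 2 w) (hwc : HasCompactSupport w)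
    (v : EuclideanSpace ℝ (Fin N)) :
    ∫ x, φ x * sder w v x = ∫ x, w x * sder φ v x := by
  set w' : EuclideanSpace ℝ (Fin N) → ℝ := fun y => fderiv ℝ w y v with hw'def
  set φ' : EuclideanSpace ℝ (Fin N) → ℝ := fun y => fderiv ℝ φ y v with hφ'def
  have hφ2 : ContDiff ℝ 2 φ := hφ.of_le (by decide)
  have hw'1 : ContDiff ℝ 1 w' := (hw.fderiv_right (m := 1) (by decide)).clm_apply contDiff_const
  have hφ'1 : ContDiff ℝ 1 φ' := (hφ2.fderiv_right (m := 1) (by decide)).clm_apply contDiff_const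
  have hw'c : HasCompactSupport w' := hwc.fderiv_apply ℝ v
  have hφ'c : HasCompactSupport φ' := hφc.fderiv_apply ℝ v
  have hcw : Continuous fun x => fderiv ℝ w' x v :=
    ((hw'1.fderiv_right (m := 0) (by decide)).clm_apply contDiff_const).continuous
  have hcφ : Continuous fun x => fderiv ℝ φ' x v :=
    ((hφ'1.fderiv_right (m := 0) (by decide)).clm_apply contDiff_const).continuous
  have I1 : Integrable (fun x => φ x * fderiv ℝ w' x v) :=
    (hφ.continuous.mul hcw).integrable_of_hasCompactSupport hφc.mul_right
  have I2 : Integrable (fun x => fderiv ℝ φ x v * w' x) :=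
    (hφ'1.continuous.mul hw'1.continuous).integrable_of_hasCompactSupport hφ'c.mul_right
  have I3 : Integrable (fun x => φ x * w' x) :=
    (hφ.continuous.mul hw'1.continuous).integrable_of_hasCompactSupport hφc.mul_right
  have I1' : Integrable (fun x => w x * fderiv ℝ φ' x v) :=
    (hw.continuous.mul hcφ).integrable_of_hasCompactSupport hwc.mul_right
  have I2' : Integrable (fun x => fderiv ℝ w x v * φ' x) :=
    (hw'1.continuous.mul hφ'1.continuous).integrable_of_hasCompactSupport hw'c.mul_right
  have I3' : Integrable (fun x => w x * φ' x) :=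
    (hw.continuous.mul hφ'1.continuous).integrable_of_hasCompactSupport hwc.mul_right
  have step1 := integral_mul_fderiv_eq_neg_fderiv_mul_of_integrable I2 I1 I3
    (fun x _ => hφ.differentiable (by simp) x) (fun x _ => hw'1.differentiable one_ne_zero x)
  have step2 := integral_mul_fderiv_eq_neg_fderiv_mul_of_integrable I2' I1' I3'
    (fun x _ => hw.differentiable (by simp) x) (fun x _ => hφ'1.differentiable one_ne_zero x)
  show ∫ x, φ x * fderiv ℝ w' x v = ∫ x, w x * fderiv ℝ φ' x v
  rw [step1, step2]
  congr 1
  apply integral_congr_ae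
  filter_upwards with x
  simp [hw'def, hφ'def, mul_comm]

lemma green_sum {φ w : EuclideanSpace ℝ (Fin N) → ℝ}
    (hφ : ContDiff ℝ ∞ φ) (hφc : HasCompactSupport φ)
    (hw : ContDiff ℝ 2 w) (hwc : HasCompactSupport w) :
    ∫ x, φ x * lapAlt w x = ∫ x, w x * lapAlt φ x := by
  have hφ2 : ContDiff ℝ 2 φ := hφ.of_le (by decide)
  have hint1 : ∀ i : Fin N,
      Integrable (fun x => φ x * sder w (EuclideanSpace.single i 1) x) := fun i =>
    (hφ.continuous.mul (sder_cont hw _)).integrable_of_hasCompactSupport hφc.mul_right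
  have hint2 : ∀ i : Fin N,
      Integrable (fun x => w x * sder φ (EuclideanSpace.single i 1) x) := fun i =>
    (hw.continuous.mul (sder_cont hφ2 _)).integrable_of_hasCompactSupport hwc.mul_right
  calc ∫ x, φ x * lapAlt w x
      = ∫ x, ∑ i : Fin N, φ x * sder w (EuclideanSpace.single i 1) x := by
        simp only [lapAlt, Finset.mul_sum]
    _ = ∑ i : Fin N, ∫ x, φ x * sder w (EuclideanSpace.single i 1) x :=
        integral_finset_sum _ fun i _ => hint1 i
    _ = ∑ i : Fin N, ∫ x, w x * sder φ (EuclideanSpace.single i 1) x :=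
        Finset.sum_congr rfl fun i _ => green hφ hφc hw hwc _
    _ = ∫ x, ∑ i : Fin N, w x * sder φ (EuclideanSpace.single i 1) x :=
        (integral_finset_sum _ fun i _ => hint2 i).symm
    _ = ∫ x, w x * lapAlt φ x := by
        simp only [lapAlt, Finset.mul_sum]

set_option maxHeartbeats 1600000 in
theorem pullin_voltage_finite (N : ℕ) (hN : 1 ≤ N)
    (Ω : Set (EuclideanSpace ℝ (Fin N)))
    (hne : Ω.Nonempty) (hbdd : Bornology.IsBounded Ω) (hopen : IsOpen Ω)
    (hconn : IsConnected Ω)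
    (f : EuclideanSpace ℝ (Fin N) → ℝ) (hmeas : Measurable f)
    (hf01 : ∀ x ∈ Ω, 0 ≤ f x ∧ f x ≤ 1)
    (hfpos : 0 < volume {x ∈ Ω | 0 < f x}) :
    BddAbove {lam : ℝ | 0 < lam ∧ ∃ u, IsClassicalSolution Ω f lam u} := by
  classical
  have hΩmeas : MeasurableSet Ω := hopen.measurableSet
  have hΩfin : volume Ω < ⊤ := hbdd.measure_lt_top
  -- Step 1: a compact set of positive measure where f is bounded below
  obtain ⟨n, hn⟩ : ∃ n : ℕ, 0 < volume {x ∈ Ω | 1 / ((n : ℝ) + 1) < f x} := by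
    by_contra h
    push_neg at h
    have hsub : {x ∈ Ω | 0 < f x} ⊆ ⋃ n : ℕ, {x ∈ Ω | 1 / ((n : ℝ) + 1) < f x} := by
      intro x hx
      obtain ⟨n, hn⟩ := exists_nat_one_div_lt hx.2
      exact Set.mem_iUnion.2 ⟨n, hx.1, hn⟩
    have h0 : volume (⋃ n : ℕ, {x ∈ Ω | 1 / ((n : ℝ) + 1) < f x}) = 0 :=
      measure_iUnion_null fun n => le_antisymm (h n) zero_le
    exact absurd (measure_mono_null hsub h0) hfpos.ne'
  have hAmeas : MeasurableSet {x ∈ Ω | 1 / ((n : ℝ) + 1) < f x} :=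
    hΩmeas.inter (measurableSet_lt measurable_const hmeas)
  have hAfin : volume {x ∈ Ω | 1 / ((n : ℝ) + 1) < f x} ≠ ⊤ :=
    (lt_of_le_of_lt (measure_mono (Set.sep_subset _ _)) hΩfin).ne
  obtain ⟨K, hKA, hKcomp, hKlt⟩ := hAmeas.exists_isCompact_lt_add hAfin hn.ne'
  have hKpos : 0 < volume K := by
    by_contra h
    push_neg at h
    rw [le_antisymm h zero_le, zero_add] at hKlt
    exact lt_irrefl _ hKlt
  have hKΩ : K ⊆ Ω := hKA.trans (Set.sep_subset _ _)
  -- Step 2: nested compact neighborhoods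
  obtain ⟨L₁, hL₁comp, hKL₁, hL₁Ω⟩ := exists_compact_between hKcomp hopen hKΩ
  obtain ⟨L₂, hL₂comp, hL₁L₂, hL₂Ω⟩ := exists_compact_between hL₁comp hopen hL₁Ω
  obtain ⟨L₃, hL₃comp, hL₂L₃, hL₃Ω⟩ := exists_compact_between hL₂comp hopen hL₂Ω
  -- Step 3: cutoff functions
  obtain ⟨φ, hφsm, hφ0, hφ1, hφ01⟩ := smooth_urysohn (s := (interior L₁)ᶜ) (t := K)
    isOpen_interior.isClosed_compl hKcomp.isClosed
    (Set.disjoint_left.mpr fun x hx hxK => hx (hKL₁ hxK))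
  obtain ⟨χ, hχsm, hχ0, hχ1, hχ01⟩ := smooth_urysohn (s := (interior L₃)ᶜ) (t := L₂)
    isOpen_interior.isClosed_compl hL₂comp.isClosed
    (Set.disjoint_left.mpr fun x hx hxK => hx (hL₂L₃ hxK))
  have hφsupp : Function.support φ ⊆ interior L₁ := by
    intro x hx
    by_contra hmem
    exact hx (hφ0 hmem)
  have hφts : tsupport φ ⊆ L₁ :=
    closure_minimal (hφsupp.trans interior_subset) hL₁comp.isClosed
  have hφc : HasCompactSupport φ := hL₁comp.of_isClosed_subset isClosed_closure hφts
  have hχsupp : Function.support χ ⊆ interior L₃ := by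
    intro x hx
    by_contra hmem
    exact hx (hχ0 hmem)
  have hχts : tsupport χ ⊆ L₃ :=
    closure_minimal (hχsupp.trans interior_subset) hL₃comp.isClosed
  have hχc : HasCompactSupport χ := hL₃comp.of_isClosed_subset isClosed_closure hχts
  have hχtsΩ : tsupport χ ⊆ Ω := hχts.trans hL₃Ω
  have hφcont : Continuous φ := hφsm.continuous
  have hφ2 : ContDiff ℝ 2 φ := hφsm.of_le (by decide)
  -- second derivatives of φ vanish off L₁
  have hLφzero : ∀ x ∉ L₁, lapAlt φ x = 0 := by
    intro x hx
    have hterm : ∀ i : Fin N, sder φ (EuclideanSpace.single i 1) x = 0 := by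
      intro i
      have hg0 : (fun y => fderiv ℝ φ y (EuclideanSpace.single i 1))
          =ᶠ[nhds x] (fun _ => (0 : ℝ)) := by
        filter_upwards [hL₁comp.isClosed.isOpen_compl.mem_nhds hx] with y hy
        have hφ0y : φ =ᶠ[nhds y] (fun _ => (0 : ℝ)) := by
          filter_upwards [hL₁comp.isClosed.isOpen_compl.mem_nhds hy] with z hz
          exact hφ0 fun hmem => hz (interior_subset hmem)
        rw [hφ0y.fderiv_eq]
        simp
      rw [sder, hg0.fderiv_eq]
      simp
    simp only [lapAlt]
    exact Finset.sum_eq_zero fun i _ => hterm i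
  have hLφc : HasCompactSupport (lapAlt φ) := HasCompactSupport.intro hL₁comp hLφzero
  set C : ℝ := ∫ x, |lapAlt φ x| with hCdef
  set c : ℝ := ∫ x, Set.indicator K f x with hcdef
  have hKfin : volume K ≠ ⊤ := hKcomp.measure_lt_top.ne
  have hIKf : Integrable (Set.indicator K f) := by
    rw [integrable_indicator_iff hKcomp.measurableSet]
    apply Measure.integrableOn_of_bounded hKfin hmeas.aestronglyMeasurable (M := 1)
    rw [ae_restrict_iff' hKcomp.measurableSet]
    filter_upwards with x hx
    have h1 := hf01 x (hKΩ hx)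
    have h2 := (hKA hx).2
    rw [Real.norm_eq_abs, abs_le]
    constructor <;> linarith
  have hcpos : 0 < c := by
    have hlow : Integrable (Set.indicator K (fun _ => 1 / ((n : ℝ) + 1))) := by
      rw [integrable_indicator_iff hKcomp.measurableSet]
      exact integrableOn_const hKcomp.measure_lt_top.ne
    have hmono : ∀ x, Set.indicator K (fun _ => 1 / ((n : ℝ) + 1)) x ≤ Set.indicator K f x := by
      intro x
      by_cases hx : x ∈ K
      · rw [Set.indicator_of_mem hx, Set.indicator_of_mem hx]
        exact le_of_lt (hKA hx).2
      · rw [Set.indicator_of_notMem hx, Set.indicator_of_notMem hx]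
    have h1 : (0 : ℝ) < (volume K).toReal * (1 / ((n : ℝ) + 1)) := by
      apply mul_pos
      · exact ENNReal.toReal_pos hKpos.ne' hKfin
      · positivity
    calc (0 : ℝ) < (volume K).toReal * (1 / ((n : ℝ) + 1)) := h1
      _ = ∫ x, Set.indicator K (fun _ => 1 / ((n : ℝ) + 1)) x := by
          rw [integral_indicator_const _ hKcomp.measurableSet]
          simp [smul_eq_mul, measureReal_def]
      _ ≤ c := integral_mono hlow hIKf hmono
  -- the bound
  refine ⟨C / c, fun lam hlam => ?_⟩
  obtain ⟨hlampos, u, hcont, hC2, hsol, hbound⟩ := hlam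
  -- Step 5: glued function
  set w : EuclideanSpace ℝ (Fin N) → ℝ := fun x => χ x * Set.indicator Ω u x with hwdef
  have hw2 : ContDiff ℝ 2 w := glue_contDiff hopen hC2 hχsm hχtsΩ
  have hwc : HasCompactSupport w := hχc.mul_right
  have hw01 : ∀ x, 0 ≤ w x ∧ w x ≤ 1 := by
    intro x
    have hχx := hχ01 x
    by_cases hx : x ∈ Ω
    · have hux := hsol x hx
      simp only [hwdef, Set.indicator_of_mem hx]
      constructor
      · exact mul_nonneg hχx.1 hux.1.le
      · calc χ x * u x ≤ 1 * 1 :=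
            mul_le_mul hχx.2 hux.2.1.le hux.1.le zero_le_one
          _ = 1 := one_mul 1
    · simp [hwdef, Set.indicator_of_notMem hx]
  have hOopen : IsOpen (interior L₂ ∩ Ω) := isOpen_interior.inter hopen
  have hφO : Function.support φ ⊆ interior L₂ ∩ Ω := by
    intro x hx
    have h1 : x ∈ interior L₁ := hφsupp hx
    exact ⟨hL₁L₂ (interior_subset h1), hL₁Ω (interior_subset h1)⟩
  have hwO : EqOn w u (interior L₂ ∩ Ω) := by
    intro x hx
    have hχx : χ x = 1 := hχ1 (interior_subset hx.1)
    simp only [hwdef]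
    rw [hχx, Set.indicator_of_mem hx.2, one_mul]
  -- second derivatives of w agree with those of u on the open set
  have hD2 : ∀ x ∈ interior L₂ ∩ Ω, ∀ v, sder w v x = iteratedFDeriv ℝ 2 u x ![v, v] := by
    intro x hx v
    have h1 : (fun y => fderiv ℝ w y v) =ᶠ[nhds x] (fun y => fderiv ℝ u y v) := by
      filter_upwards [hOopen.mem_nhds hx] with y hy
      rw [(hwO.eventuallyEq_of_mem (hOopen.mem_nhds hy)).fderiv_eq]
    rw [sder, h1.fderiv_eq, ← sder]
    exact d2_eq_on hopen hC2 hx.2 v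
  have hLwlap : ∀ x ∈ Function.support φ, lapAlt w x = -(lam * f x / (1 - u x) ^ 2) := by
    intro x hx
    have hxO := hφO hx
    have heq : lapAlt w x = laplacian u x := by
      simp only [lapAlt, laplacian]
      exact Finset.sum_congr rfl fun i _ => hD2 x hxO (EuclideanSpace.single i 1)
    rw [heq]
    have h := (hsol x hxO.2).2.2
    linarith
  have hLwcont : Continuous (lapAlt w) := lapAlt_cont hw2
  -- key pointwise inequality
  have hpoint : ∀ x, Set.indicator Ω (fun y => lam * (φ y * f y)) x ≤ -(φ x * lapAlt w x) := by
    intro x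
    by_cases hφx : φ x = 0
    · rw [hφx, zero_mul, neg_zero]
      by_cases hx : x ∈ Ω
      · rw [Set.indicator_of_mem hx, hφx, zero_mul, mul_zero]
      · rw [Set.indicator_of_notMem hx]
    · have hx : x ∈ Function.support φ := hφx
      have hxΩ : x ∈ Ω := (hφO hx).2
      rw [Set.indicator_of_mem hxΩ, hLwlap x hx]
      have h1 := hsol x hxΩ
      have hφpos : 0 ≤ φ x := (hφ01 x).1
      have h1u : 0 < 1 - u x := by linarith [h1.2.1]
      have hfx : 0 ≤ f x := (hf01 x hxΩ).1
      have hsq : (1 - u x) ^ 2 ≤ 1 := by nlinarith [h1.1]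
      have hsqpos : 0 < (1 - u x) ^ 2 := by positivity
      have key : lam * f x ≤ lam * f x / (1 - u x) ^ 2 := by
        rw [le_div_iff₀ hsqpos]
        nlinarith [mul_nonneg hlampos.le hfx]
      calc lam * (φ x * f x) = φ x * (lam * f x) := by ring
        _ ≤ φ x * (lam * f x / (1 - u x) ^ 2) := mul_le_mul_of_nonneg_left key hφpos
        _ = -(φ x * -(lam * f x / (1 - u x) ^ 2)) := by ring
  -- integrability facts
  have hIφf : Integrable (Set.indicator Ω (fun y => φ y * f y)) := by
    rw [integrable_indicator_iff hΩmeas]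
    apply Measure.integrableOn_of_bounded hΩfin.ne
      ((hφcont.measurable.mul hmeas).aestronglyMeasurable) (M := 1)
    rw [ae_restrict_iff' hΩmeas]
    filter_upwards with x hx
    have h1 := hf01 x hx
    have h2 := hφ01 x
    rw [Real.norm_eq_abs, abs_le, Pi.mul_apply]
    constructor
    · nlinarith [h2.1, h1.1]
    · nlinarith [h2.2, h1.2, h2.1, h1.1]
  have hIg₁ : Integrable (Set.indicator Ω (fun y => lam * (φ y * f y))) := by
    have h := hIφf
    rw [integrable_indicator_iff hΩmeas] at h ⊢
    exact h.const_mul lam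
  have hIRHS : Integrable (fun x => -(φ x * lapAlt w x)) :=
    ((hφcont.mul hLwcont).neg).integrable_of_hasCompactSupport ((HasCompactSupport.mul_right hφc).comp_left (g := Neg.neg) neg_zero)
  -- inequality chain
  have hchain1 : c ≤ ∫ x, Set.indicator Ω (fun y => φ y * f y) x := by
    apply integral_mono hIKf hIφf
    intro x
    by_cases hx : x ∈ K
    · rw [Set.indicator_of_mem hx, Set.indicator_of_mem (hKΩ hx), hφ1 hx]
      simp
    · rw [Set.indicator_of_notMem hx]
      by_cases hx2 : x ∈ Ω
      · rw [Set.indicator_of_mem hx2]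
        exact mul_nonneg (hφ01 x).1 (hf01 x hx2).1
      · rw [Set.indicator_of_notMem hx2]
  have hchain2 : lam * ∫ x, Set.indicator Ω (fun y => φ y * f y) x ≤ C := by
    have e1 : ∫ x, Set.indicator Ω (fun y => lam * (φ y * f y)) x
        = lam * ∫ x, Set.indicator Ω (fun y => φ y * f y) x := by
      rw [integral_indicator hΩmeas, integral_indicator hΩmeas, integral_const_mul]
    have e2 : ∫ x, Set.indicator Ω (fun y => lam * (φ y * f y)) x
        ≤ ∫ x, -(φ x * lapAlt w x) := integral_mono hIg₁ hIRHS hpoint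
    have e3 : ∫ x, -(φ x * lapAlt w x) = -∫ x, φ x * lapAlt w x := integral_neg _
    have e4 := green_sum hφsm hφc hw2 hwc
    have e5 : -∫ x, w x * lapAlt φ x ≤ C := by
      rw [← integral_neg]
      apply integral_mono
      · exact ((hw2.continuous.mul (lapAlt_cont hφ2)).neg).integrable_of_hasCompactSupport
          ((HasCompactSupport.mul_right hwc).comp_left (g := Neg.neg) neg_zero)
      · exact ((lapAlt_cont hφ2).abs).integrable_of_hasCompactSupport
          hLφc.abs
      · intro x
        have h1 := hw01 x
        calc -(w x * lapAlt φ x) ≤ |w x * lapAlt φ x| := neg_le_abs _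
          _ = w x * |lapAlt φ x| := by rw [abs_mul, abs_of_nonneg h1.1]
          _ ≤ 1 * |lapAlt φ x| := mul_le_mul_of_nonneg_right h1.2 (abs_nonneg _)
          _ = |lapAlt φ x| := one_mul _
    calc lam * ∫ x, Set.indicator Ω (fun y => φ y * f y) x
        = ∫ x, Set.indicator Ω (fun y => lam * (φ y * f y)) x := e1.symm
      _ ≤ ∫ x, -(φ x * lapAlt w x) := e2
      _ = -∫ x, φ x * lapAlt w x := e3
      _ = -∫ x, w x * lapAlt φ x := by rw [e4]
      _ ≤ C := e5
  rw [le_div_iff₀ hcpos]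
  calc lam * c ≤ lam * ∫ x, Set.indicator Ω (fun y => φ y * f y) x :=
      mul_le_mul_of_nonneg_left hchain1 hlampos.le
    _ ≤ C := hchain2
end

section
/- Let N ≥ 1, R > 0, M > 0, and define w : ℝ^N → ℝ by w(x) = (1/3)(1 − ‖x‖²/R²). Then the Laplacian of w is identically −2N/(3R²) on ℝ^N; moreover, for any function f : ℝ^N → ℝ with 0 ≤ f(x) ≤ M for all x, and for any λ with 0 < λ ≤ 8N/(27 R² M), one has −Δw(x) = 2N/(3R²) ≥ λ f(x)/(1 − w(x))² for every x with ‖x‖ ≤ R (i.e. w is a supersolution of the MEMS equation on the ball B_R(0)). -/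
open Metric MeasureTheory

lemma lap_eq_aux (N : ℕ) (R : ℝ) (x : EuclideanSpace ℝ (Fin N)) :
    laplacian (fun y : EuclideanSpace ℝ (Fin N) => (1/3 : ℝ) * (1 - ‖y‖ ^ 2 / R ^ 2)) x
      = -(2 * N / (3 * R ^ 2)) := by
  unfold laplacian
  set u := fun y : EuclideanSpace ℝ (Fin N) => (1/3 : ℝ) * (1 - ‖y‖ ^ 2 / R ^ 2)
  have hd : ∀ y : EuclideanSpace ℝ (Fin N),
      HasFDerivAt u ((-(2 / (3 * R ^ 2))) • innerSL ℝ y) y := by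
    intro y
    have h := (hasStrictFDerivAt_norm_sq y).hasFDerivAt
    have h2 := (h.const_mul (1 / (3 * R ^ 2))).neg.const_add (1/3 : ℝ)
    have e1 : u = fun x => 1 / 3 + (-fun y => 1 / (3 * R ^ 2) * ‖y‖ ^ 2) x := by
      funext z; simp only [u, Pi.neg_apply]; ring
    have e2 : (-(2 / (3 * R ^ 2))) • innerSL ℝ y = -((1 / (3 * R ^ 2)) • 2 • (innerSL ℝ) y) := by
      ext v; simp [smul_smul]; ring
    rw [e1, e2]; exact h2
  have hfd : fderiv ℝ u = fun y => (-(2 / (3 * R ^ 2))) • innerSL ℝ y := by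
    funext y; exact (hd y).fderiv
  have hfd2 : fderiv ℝ (fderiv ℝ u) x = (-(2 / (3 * R ^ 2))) • innerSL ℝ := by
    rw [hfd]
    have : (fun y : EuclideanSpace ℝ (Fin N) => (-(2 / (3 * R ^ 2))) • innerSL ℝ y)
        = ⇑((-(2 / (3 * R ^ 2))) • innerSL ℝ :
            EuclideanSpace ℝ (Fin N) →L[ℝ] EuclideanSpace ℝ (Fin N) →L[ℝ] ℝ) := by
      funext y; rfl
    rw [this, ContinuousLinearMap.fderiv]
  have key : ∀ i : Fin N, iteratedFDeriv ℝ 2 u x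
      ![EuclideanSpace.single i 1, EuclideanSpace.single i 1] = -(2 / (3 * R ^ 2)) := by
    intro i
    rw [iteratedFDeriv_two_apply, hfd2]
    simp [innerSL_apply_apply, real_inner_self_eq_norm_sq, EuclideanSpace.norm_single]
    show 2 / (3 * R ^ 2) * inner ℝ (EuclideanSpace.single i (1:ℝ)) (EuclideanSpace.single i (1:ℝ)) = _
    rw [real_inner_self_eq_norm_sq, EuclideanSpace.norm_single]; simp
  simp only [key, Finset.sum_const, Finset.card_univ, Fintype.card_fin, nsmul_eq_mul]
  ring

theorem quadratic_supersolution (N : ℕ) (hN : 1 ≤ N) (R M : ℝ) (hR : 0 < R) (hM : 0 < M) :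
    (∀ x : EuclideanSpace ℝ (Fin N),
      laplacian (fun y => (1 / 3) * (1 - ‖y‖ ^ 2 / R ^ 2)) x = -(2 * N / (3 * R ^ 2))) ∧
    ∀ (f : EuclideanSpace ℝ (Fin N) → ℝ), (∀ x, 0 ≤ f x ∧ f x ≤ M) →
      ∀ lam : ℝ, 0 < lam → lam ≤ 8 * N / (27 * R ^ 2 * M) →
        ∀ x : EuclideanSpace ℝ (Fin N), ‖x‖ ≤ R →
          2 * N / (3 * R ^ 2) ≥ lam * f x / (1 - (1 / 3) * (1 - ‖x‖ ^ 2 / R ^ 2)) ^ 2 := by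
  constructor
  · exact fun x => lap_eq_aux N R x
  · intro f hf lam hlam hlam' x hx
    set t : ℝ := ‖x‖ ^ 2 / R ^ 2 with ht
    have ht0 : 0 ≤ t := by positivity
    have hw : 1 - (1/3 : ℝ) * (1 - t) = 2/3 + t/3 := by ring
    have hge : (2/3 : ℝ) ≤ 1 - (1/3 : ℝ) * (1 - t) := by
      rw [hw]; linarith
    have hsq : (4/9 : ℝ) ≤ (1 - (1/3 : ℝ) * (1 - t)) ^ 2 := by
      nlinarith
    have hfx := hf x
    have hnum : lam * f x ≤ 8 * N / (27 * R ^ 2) := by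
      have h1 : lam * f x ≤ lam * M := by
        exact mul_le_mul_of_nonneg_left hfx.2 hlam.le
      have h2 : lam * M ≤ 8 * N / (27 * R ^ 2 * M) * M := by
        exact mul_le_mul_of_nonneg_right hlam' hM.le
      have h3 : 8 * N / (27 * R ^ 2 * M) * M = 8 * N / (27 * R ^ 2) := by
        field_simp
      linarith
    have hnum0 : 0 ≤ lam * f x := mul_nonneg hlam.le hfx.1
    have hsq0 : (0:ℝ) < (1 - (1/3 : ℝ) * (1 - t)) ^ 2 := by linarith
    calc lam * f x / (1 - (1/3 : ℝ) * (1 - t)) ^ 2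
        ≤ (8 * N / (27 * R ^ 2)) / (4/9 : ℝ) := by
          exact div_le_div₀ (by positivity) hnum (by norm_num) hsq
      _ = 2 * N / (3 * R ^ 2) := by field_simp; ring
end

section
/- Let N ≥ 1 and let Ω = B_1(0) ⊂ ℝ^N be the open unit ball. If λ > (N+2)²/8, then there is no function u : ℝ^N → ℝ which is twice continuously differentiable on the closed unit ball, satisfies 0 < u(x) < 1 and −Δu(x) = λ/(1−u(x))² for all x ∈ Ω, and u(x) = 0 for all x on the unit sphere. In other words, for the constant permittivity profile f ≡ 1 on the unit ball, the pull-in voltage satisfies λ*(B_1(0)) ≤ (N+2)²/8. -/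
open Metric MeasureTheory

section PohAuxSec
open Set Filter Asymptotics

namespace PohAux

variable {N : ℕ}

def Q (y : Fin N → ℝ) : ℝ := ∑ i, y i ^ 2

lemma Q_nonneg (y : Fin N → ℝ) : 0 ≤ Q y :=
  Finset.sum_nonneg fun _ _ => sq_nonneg _

lemma Q_smul (c : ℝ) (y : Fin N → ℝ) : Q (c • y) = c ^ 2 * Q y := by
  simp only [Q, Pi.smul_apply, smul_eq_mul, mul_pow, Finset.mul_sum]

lemma Q_continuous : Continuous (Q (N := N)) := by
  apply continuous_finset_sum
  intro i _
  exact (continuous_apply i).pow 2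

noncomputable def LQ (y : Fin N → ℝ) : (Fin N → ℝ) →L[ℝ] ℝ :=
  ∑ i, (2 * y i) • ContinuousLinearMap.proj i

lemma LQ_apply (y v : Fin N → ℝ) : LQ y v = ∑ i, 2 * y i * v i := by
  simp [LQ, mul_assoc]

lemma hasFDerivAt_proj (i : Fin N) (y : Fin N → ℝ) :
    HasFDerivAt (fun z : Fin N → ℝ => z i)
      (ContinuousLinearMap.proj (R := ℝ) (φ := fun _ : Fin N => ℝ) i) y :=
  hasFDerivAt_apply i y

lemma hasFDerivAt_Q (y : Fin N → ℝ) : HasFDerivAt Q (LQ y) y := by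
  have h : ∀ i ∈ Finset.univ (α := Fin N), HasFDerivAt (fun z : Fin N → ℝ => z i ^ 2)
      ((2 * y i) • ContinuousLinearMap.proj (R := ℝ) (φ := fun _ : Fin N => ℝ) i) y := by
    intro i _
    have h2 := (hasFDerivAt_proj i y).mul (hasFDerivAt_proj i y)
    have : (fun z : Fin N → ℝ => z i ^ 2) = fun z => z i * z i := by
      funext z; ring
    rw [this]
    convert! h2 using 1
    ext v
    simp; ring
  exact HasFDerivAt.fun_sum h

def Phi (y : Fin N → ℝ) : ℝ := (1 - Q y) ^ 2

lemma Phi_nonneg (y : Fin N → ℝ) : 0 ≤ Phi y := sq_nonneg _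

lemma Phi_continuous : Continuous (Phi (N := N)) :=
  (continuous_const.sub Q_continuous).pow 2

noncomputable def LPhi (y : Fin N → ℝ) : (Fin N → ℝ) →L[ℝ] ℝ :=
  (-2 * (1 - Q y)) • LQ y

lemma hasFDerivAt_Phi (y : Fin N → ℝ) : HasFDerivAt Phi (LPhi y) y := by
  have h1 : HasFDerivAt (fun z : Fin N → ℝ => 1 - Q z) (0 - LQ y) y :=
    (hasFDerivAt_const (1:ℝ) y).sub (hasFDerivAt_Q y)
  have h2 := h1.mul h1
  have : Phi = fun z : Fin N → ℝ => (1 - Q z) * (1 - Q z) := by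
    funext z; simp [Phi]; ring
  rw [this]
  convert! h2 using 1
  ext v
  simp [LPhi]; ring

def phic (i : Fin N) (y : Fin N → ℝ) : ℝ := -4 * (1 - Q y) * y i

lemma LPhi_single (y : Fin N → ℝ) (i : Fin N) : LPhi y (Pi.single i 1) = phic i y := by
  simp [LPhi, LQ_apply, phic, Pi.single_apply]
  ring

noncomputable def Lphic (i : Fin N) (y : Fin N → ℝ) : (Fin N → ℝ) →L[ℝ] ℝ :=
  (4 * y i) • LQ y + (-4 * (1 - Q y)) • ContinuousLinearMap.proj i

lemma hasFDerivAt_phic (i : Fin N) (y : Fin N → ℝ) :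
    HasFDerivAt (phic i) (Lphic i y) y := by
  have h1 : HasFDerivAt (fun z : Fin N → ℝ => -4 * (1 - Q z)) ((4:ℝ) • LQ y) y := by
    have := ((hasFDerivAt_const (1:ℝ) y).sub (hasFDerivAt_Q y)).const_mul (-4 : ℝ)
    convert! this using 1
    ext v; simp
  have := h1.mul (hasFDerivAt_proj i y)
  have heq : phic i = fun z : Fin N → ℝ => (-4 * (1 - Q z)) * z i := by
    funext z; simp [phic]
  rw [heq]
  convert! this using 1
  ext v
  simp [Lphic]; ring

lemma sum_Lphic_single (y : Fin N → ℝ) :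
    ∑ i, Lphic i y (Pi.single i 1) = 8 * Q y - 4 * N * (1 - Q y) := by
  have h : ∀ i : Fin N, Lphic i y (Pi.single i 1) = 8 * y i ^ 2 - 4 * (1 - Q y) := by
    intro i
    simp [Lphic, LQ_apply, Pi.single_apply]
    ring
  rw [Finset.sum_congr rfl (fun i _ => h i)]
  simp [Finset.sum_sub_distrib, ← Finset.mul_sum, Q]
  ring

noncomputable def ee (N : ℕ) : EuclideanSpace ℝ (Fin N) ≃L[ℝ] (Fin N → ℝ) :=
  EuclideanSpace.equiv (Fin N) ℝ

lemma ee_apply (x : EuclideanSpace ℝ (Fin N)) (i : Fin N) : ee N x i = x i := rfl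

lemma ee_symm_apply (y : Fin N → ℝ) (i : Fin N) : ((ee N).symm y) i = y i := rfl

lemma norm_ee_symm (y : Fin N → ℝ) : ‖(ee N).symm y‖ = Real.sqrt (Q y) := by
  rw [EuclideanSpace.norm_eq]
  congr 1
  apply Finset.sum_congr rfl
  intro i _
  rw [ee_symm_apply]
  simp [Real.norm_eq_abs, sq_abs]

lemma mem_cB_iff (y : Fin N → ℝ) :
    (ee N).symm y ∈ closedBall (0 : EuclideanSpace ℝ (Fin N)) 1 ↔ Q y ≤ 1 := by
  rw [mem_closedBall_zero_iff, norm_ee_symm]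
  have h1 : Real.sqrt (Q y) ^ 2 = Q y := Real.sq_sqrt (Q_nonneg y)
  have h2 : 0 ≤ Real.sqrt (Q y) := Real.sqrt_nonneg _
  constructor <;> intro h <;> nlinarith

lemma mem_oB_iff (y : Fin N → ℝ) :
    (ee N).symm y ∈ ball (0 : EuclideanSpace ℝ (Fin N)) 1 ↔ Q y < 1 := by
  rw [mem_ball_zero_iff, norm_ee_symm]
  have h1 : Real.sqrt (Q y) ^ 2 = Q y := Real.sq_sqrt (Q_nonneg y)
  have h2 : 0 ≤ Real.sqrt (Q y) := Real.sqrt_nonneg _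
  constructor <;> intro h <;> nlinarith

lemma mem_sphere_iff (y : Fin N → ℝ) :
    (ee N).symm y ∈ sphere (0 : EuclideanSpace ℝ (Fin N)) 1 ↔ Q y = 1 := by
  rw [mem_sphere_zero_iff_norm, norm_ee_symm]
  have h1 : Real.sqrt (Q y) ^ 2 = Q y := Real.sq_sqrt (Q_nonneg y)
  have h2 : 0 ≤ Real.sqrt (Q y) := Real.sqrt_nonneg _
  constructor <;> intro h <;> nlinarith

noncomputable def vv (u : EuclideanSpace ℝ (Fin N) → ℝ) : (Fin N → ℝ) → ℝ :=
  fun y => u ((ee N).symm y)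

lemma ee_single (i : Fin N) : ee N (EuclideanSpace.single i (1:ℝ)) = Pi.single i 1 := by
  funext j
  rw [ee_apply]
  simp [EuclideanSpace.single_apply, Pi.single_apply, eq_comm]

lemma laplacian_eq (u : EuclideanSpace ℝ (Fin N) → ℝ) (x : EuclideanSpace ℝ (Fin N))
    (hH : DifferentiableAt ℝ (fderiv ℝ (vv u)) (ee N x)) :
    laplacian u x
      = ∑ i, fderiv ℝ (fderiv ℝ (vv u)) (ee N x) (Pi.single i 1) (Pi.single i 1) := by
  set e := ee N
  set H := fderiv ℝ (fderiv ℝ (vv u)) (e x) with hHdef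
  have hu_eq : u = (vv u) ∘ ⇑e := by
    funext z; simp [vv, e, ContinuousLinearEquiv.symm_apply_apply]
  set A : ((Fin N → ℝ) →L[ℝ] ℝ) →L[ℝ] (EuclideanSpace ℝ (Fin N) →L[ℝ] ℝ) :=
    (ContinuousLinearMap.compL ℝ (EuclideanSpace ℝ (Fin N)) (Fin N → ℝ) ℝ).flip
      (e : EuclideanSpace ℝ (Fin N) →L[ℝ] (Fin N → ℝ)) with hAdef
  have hA : ∀ L : (Fin N → ℝ) →L[ℝ] ℝ,
      A L = L.comp (e : EuclideanSpace ℝ (Fin N) →L[ℝ] (Fin N → ℝ)) := fun L => rfl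
  have hfd : fderiv ℝ u = fun z => A (fderiv ℝ (vv u) (e z)) := by
    funext z
    rw [hA]
    conv_lhs => rw [hu_eq]
    exact e.comp_right_fderiv
  have hinner : HasFDerivAt (fun z => fderiv ℝ (vv u) (e z))
      (H.comp (e : EuclideanSpace ℝ (Fin N) →L[ℝ] (Fin N → ℝ))) x :=
    hH.hasFDerivAt.comp x e.hasFDerivAt
  have houter : HasFDerivAt (fun z => A (fderiv ℝ (vv u) (e z)))
      (A.comp (H.comp (e : EuclideanSpace ℝ (Fin N) →L[ℝ] (Fin N → ℝ)))) x :=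
    A.hasFDerivAt.comp x hinner
  have hsnd : fderiv ℝ (fderiv ℝ u) x
      = A.comp (H.comp (e : EuclideanSpace ℝ (Fin N) →L[ℝ] (Fin N → ℝ))) := by
    rw [hfd]
    exact houter.fderiv
  unfold laplacian
  apply Finset.sum_congr rfl
  intro i _
  rw [iteratedFDeriv_two_apply]
  simp only [Matrix.cons_val_zero, Matrix.cons_val_one, Matrix.head_cons]
  rw [hsnd]
  simp only [ContinuousLinearMap.comp_apply, hA, ContinuousLinearMap.comp_apply]
  rw [show ((e : EuclideanSpace ℝ (Fin N) →L[ℝ] (Fin N → ℝ)) (EuclideanSpace.single i (1:ℝ)))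
      = e (EuclideanSpace.single i (1:ℝ)) from rfl]
  rw [ee_single]

lemma hasFDerivAt_zero_of_sq_bound {F : (Fin N → ℝ) → ℝ} {y₀ : Fin N → ℝ} {C : ℝ}
    (h : ∀ᶠ z in nhds y₀, |F z| ≤ C * ‖z - y₀‖ ^ 2) (h0 : F y₀ = 0) :
    HasFDerivAt F (0 : (Fin N → ℝ) →L[ℝ] ℝ) y₀ := by
  have big : (fun z => F z) =O[nhds y₀] (fun z => ‖z - y₀‖ ^ 2) := by
    rw [isBigO_iff]
    refine ⟨C, ?_⟩
    filter_upwards [h] with z hz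
    simpa [Real.norm_eq_abs, abs_of_nonneg (sq_nonneg (‖z - y₀‖))] using hz
  have little : (fun z : Fin N → ℝ => ‖z - y₀‖ ^ 2) =o[nhds y₀] (fun z => z - y₀) := by
    rw [isLittleO_iff]
    intro c hc
    have hev : ∀ᶠ z in nhds y₀, ‖z - y₀‖ ≤ c := by
      have : Metric.ball y₀ c ∈ nhds y₀ := Metric.ball_mem_nhds _ hc
      filter_upwards [this] with z hz
      rw [Metric.mem_ball, dist_eq_norm] at hz
      exact hz.le
    filter_upwards [hev] with z hz
    have h1 : (0:ℝ) ≤ ‖z - y₀‖ := norm_nonneg _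
    rw [Real.norm_eq_abs, abs_of_nonneg (sq_nonneg _), pow_two]
    exact mul_le_mul_of_nonneg_right hz h1
  have := big.trans_isLittleO little
  refine HasFDerivAt.of_isLittleO ?_
  simpa [h0] using this

lemma t_cube (t : ℝ) (h0 : 0 ≤ t) (h1 : t ≤ 1) : t * (1 - t) ^ 2 ≤ 4 / 27 := by
  nlinarith [sq_nonneg (t - 1/3), sq_nonneg t]

lemma key_ineq (K lam t s : ℝ) (hK : 0 ≤ K) (ht0 : 0 ≤ t) (ht1 : t < 1)
    (hs0 : 0 ≤ s) (hs1 : s ≤ 1) (hlam : (K + 2) ^ 2 / 8 < lam) :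
    (lam - 2 * (K + 2) ^ 2 / 27) * s ^ 2
      ≤ t * (8 * (1 - s) - 4 * K * s) + lam * s ^ 2 / (1 - t) ^ 2 := by
  set w : ℝ := (1 - t) ^ 2 with hw
  have hwpos : 0 < w := by
    rw [hw]
    have h1t : 0 < 1 - t := by linarith
    positivity
  have hw1 : w ≤ 1 := by nlinarith
  set mu : ℝ := (K + 2) ^ 2 / 2 with hmu
  have hcc : 0 < lam - 2 * (K + 2) ^ 2 / 27 := by nlinarith [sq_nonneg (K + 2)]
  have htw : t * w ≤ 4 / 27 := by
    rw [hw]; exact t_cube t ht0 ht1.le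
  have h1 : -(mu * t * s ^ 2) ≤ t * (8 * (1 - s) - 4 * K * s) := by
    have key : 0 ≤ 8 * (1 - s) - 4 * K * s + mu * s ^ 2 := by
      have := sq_nonneg ((K + 2) * s - 4)
      rw [hmu]; nlinarith
    nlinarith [mul_nonneg ht0 key]
  rw [div_eq_mul_inv]
  have hinv : (1:ℝ) ≤ w⁻¹ := (one_le_inv₀ hwpos).mpr hw1
  have h2 : mu * t * s ^ 2 ≤ (2 * (K + 2) ^ 2 / 27) * (s ^ 2 * w⁻¹) := by
    have e1 : mu * t * s ^ 2 = (mu * (t * w)) * (s ^ 2 * w⁻¹) := by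
      field_simp
    rw [e1]
    have hmub : mu * (t * w) ≤ 2 * (K + 2) ^ 2 / 27 := by
      have hmunn : 0 ≤ mu := by positivity
      calc mu * (t * w) ≤ mu * (4 / 27) := by
            exact mul_le_mul_of_nonneg_left htw hmunn
        _ = 2 * (K + 2) ^ 2 / 27 := by rw [hmu]; ring
    exact mul_le_mul_of_nonneg_right hmub (by positivity : (0:ℝ) ≤ s ^ 2 * w⁻¹)
  have h3 : (lam - 2 * (K + 2) ^ 2 / 27) * s ^ 2
      ≤ (lam - 2 * (K + 2) ^ 2 / 27) * (s ^ 2 * w⁻¹) := by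
    have := mul_nonneg hcc.le (sq_nonneg s)
    nlinarith [this, hinv]
  have hgoal : lam * s ^ 2 * w⁻¹ = (lam - 2 * (K + 2) ^ 2 / 27) * (s ^ 2 * w⁻¹)
      + (2 * (K + 2) ^ 2 / 27) * (s ^ 2 * w⁻¹) := by ring
  have hb : lam * s ^ 2 / w = lam * s ^ 2 * w⁻¹ := by rw [div_eq_mul_inv]
  rw [hb]
  linarith [h1, h2, h3, hgoal.ge, hgoal.le]

end PohAux

end PohAuxSec

set_option maxHeartbeats 4000000 in
theorem pohozaev_upper_bound_unit_ball (N : ℕ) (hN : 1 ≤ N) (lam : ℝ)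
    (hlam : ((N : ℝ) + 2) ^ 2 / 8 < lam) :
    ¬ ∃ u : EuclideanSpace ℝ (Fin N) → ℝ,
        ContDiffOn ℝ 2 u (closedBall (0 : EuclideanSpace ℝ (Fin N)) 1) ∧
        (∀ x ∈ ball (0 : EuclideanSpace ℝ (Fin N)) 1,
          0 < u x ∧ u x < 1 ∧ -laplacian u x = lam / (1 - u x) ^ 2) ∧
        (∀ x ∈ sphere (0 : EuclideanSpace ℝ (Fin N)) 1, u x = 0) := by
  rintro ⟨u, hu2, hsol, hbd⟩
  obtain ⟨n, rfl⟩ : ∃ n, N = n + 1 := ⟨N - 1, by omega⟩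
  classical
  set e := PohAux.ee (n + 1) with he
  set v : (Fin (n + 1) → ℝ) → ℝ := PohAux.vv u with hv
  set cB : Set (Fin (n + 1) → ℝ) := {y | PohAux.Q y ≤ 1} with hcB
  set oB : Set (Fin (n + 1) → ℝ) := {y | PohAux.Q y < 1} with hoB
  have oB_open : IsOpen oB := isOpen_lt PohAux.Q_continuous continuous_const
  have oB_sub : oB ⊆ cB := fun y hy => show PohAux.Q y ≤ 1 from le_of_lt hy
  have oB_meas : MeasurableSet oB := oB_open.measurableSet
  have cB_preim : cB = (⇑(e.symm)) ⁻¹' (closedBall (0 : EuclideanSpace ℝ (Fin (n+1))) 1) := by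
    ext y
    simp only [Set.mem_preimage, hcB, Set.mem_setOf_eq]
    rw [PohAux.mem_cB_iff]
  have cB_img : cB = (⇑e) '' (closedBall (0 : EuclideanSpace ℝ (Fin (n+1))) 1) := by
    rw [cB_preim]
    ext y
    constructor
    · intro hy
      exact ⟨e.symm y, hy, by simp⟩
    · rintro ⟨x, hx, rfl⟩
      simpa using hx
  have cB_compact : IsCompact cB := by
    rw [cB_img]
    exact (isCompact_closedBall _ _).image e.continuous
  have cB_convex : Convex ℝ cB := by
    rw [cB_preim]
    exact (convex_closedBall _ _).is_linear_preimage
      ⟨fun a b => map_add _ a b, fun c a => map_smul _ c a⟩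
  have zero_oB : (0 : Fin (n+1) → ℝ) ∈ oB := by
    simp [hoB, PohAux.Q]
  have cB_unique : UniqueDiffOn ℝ cB :=
    uniqueDiffOn_convex cB_convex ⟨0, (oB_open.subset_interior_iff.2 oB_sub) zero_oB⟩
  -- regularity of v
  have hvC2 : ContDiffOn ℝ 2 v cB := by
    rw [cB_preim]
    exact hu2.comp ((e.symm : (Fin (n+1) → ℝ) →L[ℝ] EuclideanSpace ℝ (Fin (n+1))).contDiff.contDiffOn)
      (Set.mapsTo_preimage _ _)
  have hvC2o : ContDiffOn ℝ 2 v oB := hvC2.mono oB_sub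
  have hvdiffAt : ∀ y ∈ oB, DifferentiableAt ℝ v y := fun y hy =>
    (hvC2o.differentiableOn (by norm_num)).differentiableAt (oB_open.mem_nhds hy)
  have hdv1 : ContDiffOn ℝ 1 (fderiv ℝ v) oB :=
    hvC2o.fderiv_of_isOpen oB_open (by norm_num)
  have hDAt : ∀ y ∈ oB, DifferentiableAt ℝ (fderiv ℝ v) y := fun y hy =>
    (hdv1.differentiableOn (by norm_num)).differentiableAt (oB_open.mem_nhds hy)
  -- boundary values and interior bounds
  have hv0 : ∀ y : Fin (n+1) → ℝ, PohAux.Q y = 1 → v y = 0 := by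
    intro y hy
    exact hbd _ ((PohAux.mem_sphere_iff y).2 hy)
  have hvpos : ∀ y ∈ oB, 0 < v y := fun y hy => (hsol _ ((PohAux.mem_oB_iff y).2 hy)).1
  have hvlt1 : ∀ y ∈ oB, v y < 1 := fun y hy => (hsol _ ((PohAux.mem_oB_iff y).2 hy)).2.1
  -- the PDE in coordinates
  have hPDE : ∀ y ∈ oB,
      ∑ i, fderiv ℝ (fderiv ℝ v) y (Pi.single i 1) (Pi.single i 1)
        = -(lam / (1 - v y) ^ 2) := by
    intro y hy
    have hyy : e ((e.symm) y) = y := e.apply_symm_apply y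
    have hH : DifferentiableAt ℝ (fderiv ℝ (PohAux.vv u)) (PohAux.ee (n+1) (e.symm y)) := by
      rw [show PohAux.ee (n+1) = e from rfl, hyy, ← hv]
      exact hDAt y hy
    have hlap := PohAux.laplacian_eq u (e.symm y) hH
    rw [show PohAux.ee (n+1) = e from rfl, hyy, ← hv] at hlap
    have hmem : e.symm y ∈ ball (0 : EuclideanSpace ℝ (Fin (n+1))) 1 := (PohAux.mem_oB_iff y).2 hy
    have := (hsol _ hmem).2.2
    have huv : u (e.symm y) = v y := rfl
    rw [huv] at this
    rw [← hlap]
    linarith [this]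
  -- uniform bound away from 1
  have hvcont : ContinuousOn v cB := hvC2.continuousOn
  obtain ⟨ym, hymcB, hym⟩ := cB_compact.exists_isMaxOn ⟨0, oB_sub zero_oB⟩ hvcont
  have hcmax : v ym < 1 := by
    rcases lt_or_eq_of_le (show PohAux.Q ym ≤ 1 from hymcB) with h | h
    · exact hvlt1 ym h
    · rw [hv0 ym h]; norm_num
  have hvle : ∀ y ∈ cB, v y ≤ v ym := fun y hy => hym hy
  have hvlt : ∀ y ∈ cB, v y < 1 := fun y hy => lt_of_le_of_lt (hvle y hy) hcmax
  have hvnn : ∀ y ∈ cB, 0 ≤ v y := by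
    intro y hy
    rcases lt_or_eq_of_le (show PohAux.Q y ≤ 1 from hy) with h | h
    · exact (hvpos y h).le
    · rw [hv0 y h]
  -- gradient bound
  have hvdOn : DifferentiableOn ℝ v cB := hvC2.differentiableOn (by norm_num)
  obtain ⟨M0, hM0⟩ := cB_compact.exists_bound_of_continuousOn
    (hvC2.continuousOn_fderivWithin cB_unique (by norm_num))
  set M : ℝ := max M0 0 with hM
  have hMnn : 0 ≤ M := le_max_right _ _
  have hMb : ∀ y ∈ cB, ‖fderivWithin ℝ v cB y‖ ≤ M := fun y hy =>
    (hM0 y hy).trans (le_max_left _ _)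
  have hfw : ∀ y ∈ oB, fderivWithin ℝ v cB y = fderiv ℝ v y := fun y hy =>
    fderivWithin_of_mem_nhds (Filter.mem_of_superset (oB_open.mem_nhds hy) oB_sub)
  have hDb : ∀ y ∈ oB, ‖fderiv ℝ v y‖ ≤ M := fun y hy => by
    rw [← hfw y hy]; exact hMb y (oB_sub hy)
  -- mean value estimate near the boundary
  have hMVT : ∀ z ∈ cB, 1/4 ≤ PohAux.Q z → |v z| ≤ M * (1 - PohAux.Q z) := by
    intro z hz hz14
    have hzQ : PohAux.Q z ≤ 1 := hz
    set r : ℝ := Real.sqrt (PohAux.Q z) with hrdef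
    have hr2 : r ^ 2 = PohAux.Q z := Real.sq_sqrt (PohAux.Q_nonneg z)
    have hr0 : 0 ≤ r := Real.sqrt_nonneg _
    have hrhalf : 1/2 ≤ r := by nlinarith
    have hrne : r ≠ 0 := by intro h; rw [h] at hrhalf; norm_num at hrhalf
    have hr1 : r ≤ 1 := by nlinarith
    set z' : Fin (n+1) → ℝ := r⁻¹ • z with hz'def
    have hQz' : PohAux.Q z' = 1 := by
      rw [hz'def, PohAux.Q_smul, ← hr2]
      field_simp
    have hz'cB : z' ∈ cB := le_of_eq hQz'
    have hvz' : v z' = 0 := hv0 _ hQz'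
    have hmvt := Convex.norm_image_sub_le_of_norm_fderivWithin_le hvdOn hMb cB_convex hz'cB hz
    rw [hvz', sub_zero, Real.norm_eq_abs] at hmvt
    have hzz'eq : z - z' = (1 - r⁻¹) • z := by
      rw [hz'def, sub_smul, one_smul]
    have hznorm : ‖z‖ ≤ r := by
      rw [pi_norm_le_iff_of_nonneg hr0]
      intro j
      have hj : z j ^ 2 ≤ PohAux.Q z := by
        apply Finset.single_le_sum (f := fun i => z i ^ 2) (fun i _ => sq_nonneg _)
          (Finset.mem_univ j)
      rw [Real.norm_eq_abs]
      nlinarith [abs_nonneg (z j), sq_abs (z j)]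
    have hinv1 : 1 ≤ r⁻¹ := (one_le_inv₀ (lt_of_lt_of_le (by norm_num) hrhalf)).mpr hr1
    have hzz' : ‖z - z'‖ ≤ 1 - r := by
      rw [hzz'eq, norm_smul, Real.norm_eq_abs, abs_of_nonpos (by linarith : 1 - r⁻¹ ≤ 0)]
      have h1 : -(1 - r⁻¹) * ‖z‖ ≤ (r⁻¹ - 1) * r := by
        have : -(1 - r⁻¹) = r⁻¹ - 1 := by ring
        rw [this]
        exact mul_le_mul_of_nonneg_left hznorm (by linarith)
      have h2 : (r⁻¹ - 1) * r = 1 - r := by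
        field_simp
      linarith
    have hQler : PohAux.Q z ≤ r := by nlinarith
    calc |v z| ≤ M * ‖z - z'‖ := hmvt
      _ ≤ M * (1 - r) := mul_le_mul_of_nonneg_left hzz' hMnn
      _ ≤ M * (1 - PohAux.Q z) := by
          have h3 : 1 - r ≤ 1 - PohAux.Q z := by linarith
          exact mul_le_mul_of_nonneg_left h3 hMnn
  -- the vector field
  set F : Fin (n+1) → (Fin (n+1) → ℝ) → ℝ := fun i z =>
    if PohAux.Q z < 1 then v z * PohAux.phic i z
      - PohAux.Phi z * (fderiv ℝ v z (Pi.single i 1)) else 0 with hF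
  set F'in : Fin (n+1) → (Fin (n+1) → ℝ) → ((Fin (n+1) → ℝ) →L[ℝ] ℝ) := fun i y =>
    (v y • PohAux.Lphic i y + PohAux.phic i y • fderiv ℝ v y)
      - (PohAux.Phi y • ((ContinuousLinearMap.apply ℝ ℝ (Pi.single i 1)).comp
            (fderiv ℝ (fderiv ℝ v) y))
        + (fderiv ℝ v y (Pi.single i 1)) • PohAux.LPhi y) with hF'in
  set F' : Fin (n+1) → (Fin (n+1) → ℝ) → ((Fin (n+1) → ℝ) →L[ℝ] ℝ) := fun i y =>
    if PohAux.Q y < 1 then F'in i y else 0 with hF'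
  -- derivative inside
  have hFin : ∀ y ∈ oB, ∀ i, HasFDerivAt (F i) (F'in i y) y := by
    intro y hy i
    have hmem : oB ∈ nhds y := oB_open.mem_nhds hy
    have heq : F i =ᶠ[nhds y] fun z => v z * PohAux.phic i z
        - PohAux.Phi z * (fderiv ℝ v z (Pi.single i 1)) := by
      filter_upwards [hmem] with z hz
      rw [hF]
      exact if_pos hz
    have h1 : HasFDerivAt v (fderiv ℝ v y) y := (hvdiffAt y hy).hasFDerivAt
    have h2 := h1.mul (PohAux.hasFDerivAt_phic i y)
    have hDD : HasFDerivAt (fderiv ℝ v) (fderiv ℝ (fderiv ℝ v) y) y :=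
      (hDAt y hy).hasFDerivAt
    have h3 : HasFDerivAt (fun z => fderiv ℝ v z (Pi.single i 1))
        ((ContinuousLinearMap.apply ℝ ℝ (Pi.single i 1)).comp
          (fderiv ℝ (fderiv ℝ v) y)) y := by
      have hcc := (ContinuousLinearMap.apply ℝ ℝ (Pi.single i 1)).hasFDerivAt.comp y hDD
      exact hcc.congr_of_eventuallyEq (Filter.Eventually.of_forall fun z => by
        simp [Function.comp, ContinuousLinearMap.apply_apply])
    have h4 := (PohAux.hasFDerivAt_Phi y).mul h3
    have h5 := h2.sub h4
    refine HasFDerivAt.congr_of_eventuallyEq ?_ heq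
    rw [hF'in]
    convert! h5 using 1
  -- derivative on the sphere
  have hFsphere : ∀ (y : Fin (n+1) → ℝ), PohAux.Q y = 1 → ∀ i,
      HasFDerivAt (F i) (0 : (Fin (n+1) → ℝ) →L[ℝ] ℝ) y := by
    intro y hQy i
    apply PohAux.hasFDerivAt_zero_of_sq_bound (C := 20 * M * (n+1)^2)
    · have hev : {z : Fin (n+1) → ℝ | 1/2 < PohAux.Q z} ∈ nhds y := by
        apply (isOpen_lt continuous_const PohAux.Q_continuous).mem_nhds
        simp only [Set.mem_setOf_eq, hQy]
        norm_num
      filter_upwards [hev] with z hz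
      by_cases hzlt : PohAux.Q z < 1
      · set d : ℝ := ‖z - y‖ with hd
        have hd0 : 0 ≤ d := norm_nonneg _
        have hcoord : ∀ j, |z j - y j| ≤ d := by
          intro j
          have := norm_le_pi_norm (z - y) j
          simpa [Real.norm_eq_abs] using this
        have hyc : ∀ j, |y j| ≤ 1 := by
          intro j
          have h1 : y j ^ 2 ≤ 1 := by
            rw [← hQy]
            exact Finset.single_le_sum (f := fun i => y i ^ 2)
              (fun i _ => sq_nonneg _) (Finset.mem_univ j)
          nlinarith [abs_nonneg (y j), sq_abs (y j)]
        have hzc : ∀ j, |z j| ≤ 1 := by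
          intro j
          have h1 : z j ^ 2 ≤ 1 := by
            refine le_trans (Finset.single_le_sum (f := fun i => z i ^ 2)
              (fun i _ => sq_nonneg _) (Finset.mem_univ j)) hzlt.le
          nlinarith [abs_nonneg (z j), sq_abs (z j)]
        have hQd : 1 - PohAux.Q z ≤ 2 * (n+1) * d := by
          have h1 : 1 - PohAux.Q z = ∑ j, (y j ^ 2 - z j ^ 2) := by
            rw [← hQy, PohAux.Q, PohAux.Q, Finset.sum_sub_distrib]
          rw [h1]
          have h2 : ∀ j ∈ Finset.univ (α := Fin (n+1)), y j ^ 2 - z j ^ 2 ≤ 2 * d := by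
            intro j _
            have hj1 := hcoord j
            have hj2 := hyc j
            have hj3 := hzc j
            have e1 : y j ^ 2 - z j ^ 2 = (y j - z j) * (y j + z j) := by ring
            have e2 : |y j - z j| ≤ d := by
              rw [abs_sub_comm]; exact hj1
            nlinarith [abs_le.1 hj2, abs_le.1 hj3, abs_le.1 e2,
              abs_nonneg (y j - z j)]
          calc ∑ j, (y j ^ 2 - z j ^ 2) ≤ ∑ _j : Fin (n+1), 2 * d :=
                Finset.sum_le_sum h2
            _ = (n+1) * (2 * d) := by
                rw [Finset.sum_const, Finset.card_univ, Fintype.card_fin]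
                simp [nsmul_eq_mul]
            _ = 2 * (n+1) * d := by ring
        have hQz14 : 1/4 ≤ PohAux.Q z := by linarith
        have hvz : |v z| ≤ M * (1 - PohAux.Q z) := hMVT z hzlt.le hQz14
        have hsingle : ‖(Pi.single i 1 : Fin (n+1) → ℝ)‖ ≤ 1 := by
          rw [pi_norm_le_iff_of_nonneg zero_le_one]
          intro j
          rcases eq_or_ne j i with rfl | hji
          · simp
          · simp [Pi.single_apply, hji]
        have hGz : |fderiv ℝ v z (Pi.single i 1)| ≤ M := by
          have h1 : |fderiv ℝ v z (Pi.single i 1)|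
              ≤ ‖fderiv ℝ v z‖ * ‖(Pi.single i 1 : Fin (n+1) → ℝ)‖ := by
            rw [← Real.norm_eq_abs]
            exact (fderiv ℝ v z).le_opNorm _
          have h2 := hDb z hzlt
          nlinarith [norm_nonneg (fderiv ℝ v z), norm_nonneg (Pi.single i 1 : Fin (n+1) → ℝ)]
        have hphiz : |PohAux.phic i z| ≤ 4 * (1 - PohAux.Q z) := by
          rw [PohAux.phic, abs_mul, abs_mul]
          have : |(-4 : ℝ)| = 4 := by norm_num
          rw [this, abs_of_nonneg (by linarith : (0:ℝ) ≤ 1 - PohAux.Q z)]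
          nlinarith [hzc i, abs_nonneg (z i)]
        have hPhiz : |PohAux.Phi z| ≤ (2 * (n+1) * d) ^ 2 := by
          rw [PohAux.Phi, abs_of_nonneg (sq_nonneg _)]
          have h1 : 0 ≤ 1 - PohAux.Q z := by linarith
          nlinarith
        rw [hF]
        simp only [if_pos hzlt]
        have hQdnn : 0 ≤ 1 - PohAux.Q z := by linarith
        calc |v z * PohAux.phic i z - PohAux.Phi z * fderiv ℝ v z (Pi.single i 1)|
            ≤ |v z * PohAux.phic i z| + |PohAux.Phi z * fderiv ℝ v z (Pi.single i 1)| :=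
              abs_sub _ _
          _ = |v z| * |PohAux.phic i z| + |PohAux.Phi z| * |fderiv ℝ v z (Pi.single i 1)| := by
              rw [abs_mul, abs_mul]
          _ ≤ 20 * M * (n+1)^2 * d ^ 2 := by
              have e1 : |v z| * |PohAux.phic i z|
                  ≤ (M * (1 - PohAux.Q z)) * (4 * (1 - PohAux.Q z)) :=
                mul_le_mul hvz hphiz (abs_nonneg _) (mul_nonneg hMnn hQdnn)
              have hsq : (1 - PohAux.Q z) * (1 - PohAux.Q z)
                  ≤ (2 * ((n:ℝ)+1) * d) * (2 * ((n:ℝ)+1) * d) :=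
                mul_self_le_mul_self hQdnn hQd
              have e2 : (M * (1 - PohAux.Q z)) * (4 * (1 - PohAux.Q z))
                  ≤ 4 * M * ((2 * ((n:ℝ)+1) * d) ^ 2) := by nlinarith
              have e3 : |PohAux.Phi z| * |fderiv ℝ v z (Pi.single i 1)|
                  ≤ (2 * ((n:ℝ)+1) * d) ^ 2 * M :=
                mul_le_mul hPhiz hGz (abs_nonneg _) (sq_nonneg _)
              have hD2 : (2 * ((n:ℝ)+1) * d) ^ 2 = 4 * ((n:ℝ)+1)^2 * d^2 := by ring
              have hcast : ((n:ℝ)+1) = ((n+1 : ℕ) : ℝ) := by push_cast; ring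
              nlinarith [e1, e2, e3, hD2, mul_nonneg hMnn (sq_nonneg d)]
      · rw [hF]
        simp only [if_neg hzlt, abs_zero]
        positivity
    · rw [hF]
      simp only [hQy]
      norm_num
  -- derivative outside
  have hFout : ∀ (y : Fin (n+1) → ℝ), 1 < PohAux.Q y → ∀ i,
      HasFDerivAt (F i) (0 : (Fin (n+1) → ℝ) →L[ℝ] ℝ) y := by
    intro y hQy i
    have hev : {z : Fin (n+1) → ℝ | 1 < PohAux.Q z} ∈ nhds y :=
      (isOpen_lt continuous_const PohAux.Q_continuous).mem_nhds hQy
    have heq : F i =ᶠ[nhds y] fun _ => (0:ℝ) := by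
      filter_upwards [hev] with z hz
      rw [hF]
      exact if_neg (not_lt.2 hz.le)
    exact (hasFDerivAt_const (0:ℝ) y).congr_of_eventuallyEq heq
  have hFall : ∀ (y : Fin (n+1) → ℝ) (i : Fin (n+1)), HasFDerivAt (F i) (F' i y) y := by
    intro y i
    rcases lt_trichotomy (PohAux.Q y) 1 with h | h | h
    · have h0 : F' i y = F'in i y := by
        show (if PohAux.Q y < 1 then F'in i y else 0) = F'in i y
        exact if_pos h
      rw [h0]
      exact hFin y h i
    · have h0 : F' i y = 0 := by
        show (if PohAux.Q y < 1 then F'in i y else 0) = 0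
        exact if_neg (by rw [h]; exact lt_irrefl 1)
      rw [h0]
      exact hFsphere y h i
    · have h0 : F' i y = 0 := by
        show (if PohAux.Q y < 1 then F'in i y else 0) = 0
        exact if_neg (not_lt.2 h.le)
      rw [h0]
      exact hFout y h i
  have hFcont : ∀ i, Continuous (F i) := by
    intro i
    rw [continuous_iff_continuousAt]
    exact fun y => (hFall y i).continuousAt
  -- the divergence of the vector field inside the ball
  set g : (Fin (n+1) → ℝ) → ℝ := fun y =>
    v y * (8 * PohAux.Q y - 4 * ((n+1 : ℕ) : ℝ) * (1 - PohAux.Q y))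
      + lam * PohAux.Phi y / (1 - v y) ^ 2 with hg
  have hdivval : ∀ y ∈ oB, ∑ i, F' i y (Pi.single i 1) = g y := by
    intro y hy
    have hterm : ∀ i : Fin (n+1), F' i y (Pi.single i 1)
        = v y * (PohAux.Lphic i y (Pi.single i 1))
          - PohAux.Phi y * (fderiv ℝ (fderiv ℝ v) y (Pi.single i 1) (Pi.single i 1)) := by
      intro i
      have h0 : F' i y = F'in i y := by
        show (if PohAux.Q y < 1 then F'in i y else 0) = F'in i y
        exact if_pos hy
      rw [h0, hF'in]
      simp only [ContinuousLinearMap.sub_apply, ContinuousLinearMap.add_apply,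
        ContinuousLinearMap.coe_smul', Pi.smul_apply, smul_eq_mul,
        ContinuousLinearMap.comp_apply, ContinuousLinearMap.apply_apply,
        PohAux.LPhi_single]
      ring
    rw [Finset.sum_congr rfl (fun i _ => hterm i), Finset.sum_sub_distrib,
      ← Finset.mul_sum, ← Finset.mul_sum, PohAux.sum_Lphic_single, hPDE y hy, hg]
    push_cast
    ring
  -- integrability of the divergence
  have hQconst : Continuous (fun y : Fin (n+1) → ℝ =>
      8 * PohAux.Q y - 4 * ((n+1 : ℕ) : ℝ) * (1 - PohAux.Q y)) :=
    (continuous_const.mul PohAux.Q_continuous).sub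
      (continuous_const.mul (continuous_const.sub PohAux.Q_continuous))
  have hgcont : ContinuousOn g cB := by
    rw [hg]
    apply ContinuousOn.add
    · exact hvcont.mul hQconst.continuousOn
    · apply ContinuousOn.div
      · exact (continuous_const.mul PohAux.Phi_continuous).continuousOn
      · exact (continuousOn_const.sub hvcont).pow 2
      · intro y hy
        exact pow_ne_zero 2 (sub_ne_zero.2 (hvlt y hy).ne')
  have hIoB : IntegrableOn g oB volume :=
    (hgcont.integrableOn_compact cB_compact).mono_set oB_sub
  have hind : (fun x => ∑ i, F' i x (Pi.single i 1)) = oB.indicator g := by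
    funext x
    by_cases hx : PohAux.Q x < 1
    · rw [Set.indicator_of_mem (show x ∈ oB from hx)]
      exact hdivval x hx
    · rw [Set.indicator_of_notMem (show x ∉ oB from hx)]
      apply Finset.sum_eq_zero
      intro i _
      have h0 : F' i x = 0 := by
        show (if PohAux.Q x < 1 then F'in i x else 0) = 0
        exact if_neg hx
      rw [h0]
      rfl
  -- apply the divergence theorem on the box [-2,2]^(n+1)
  set a : Fin (n+1) → ℝ := fun _ => -2 with ha
  set b : Fin (n+1) → ℝ := fun _ => 2 with hb
  have hab : a ≤ b := fun i => by
    show (-2:ℝ) ≤ 2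
    norm_num
  have hInd : Integrable (oB.indicator g) volume := hIoB.integrable_indicator oB_meas
  have Hi : IntegrableOn (fun x => ∑ i, F' i x (Pi.single i 1)) (Set.Icc a b) volume := by
    rw [hind]
    exact hInd.integrableOn
  have hdivthm := MeasureTheory.integral_divergence_of_hasFDerivAt_off_countable'
    a b hab F F' ∅ Set.countable_empty (fun i => (hFcont i).continuousOn)
    (fun x _ i => hFall x i) Hi
  have hface : ∀ (i : Fin (n+1)) (c : ℝ), 4 ≤ c^2 → ∀ x : Fin n → ℝ,
      F i (i.insertNth c x) = 0 := by
    intro i c hc x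
    set p : Fin (n+1) → ℝ := i.insertNth c x with hp
    have hQp : 4 ≤ PohAux.Q p := by
      refine le_trans hc ?_
      have h1 : p i ^ 2 ≤ PohAux.Q p :=
        Finset.single_le_sum (f := fun j : Fin (n+1) => p j ^ 2)
          (fun j _ => sq_nonneg _) (Finset.mem_univ i)
      have h2 : p i = c := by simp [hp]
      rwa [h2] at h1
    rw [hF]
    exact if_neg (by linarith)
  have hzero : ∫ x in Set.Icc a b, ∑ i, F' i x (Pi.single i 1) = 0 := by
    rw [hdivthm]
    apply Finset.sum_eq_zero
    intro i _
    have hfun1 : (fun x : Fin n → ℝ => F i (i.insertNth (b i) x)) = fun _ => (0:ℝ) :=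
      funext fun x => hface i (b i) (by rw [hb]; norm_num) x
    have hfun2 : (fun x : Fin n → ℝ => F i (i.insertNth (a i) x)) = fun _ => (0:ℝ) :=
      funext fun x => hface i (a i) (by rw [ha]; norm_num) x
    rw [hfun1, hfun2]
    simp
  rw [hind] at hzero
  rw [MeasureTheory.setIntegral_indicator oB_meas] at hzero
  have hoBsub : oB ⊆ Set.Icc a b := by
    intro y hy
    rw [Set.mem_Icc]
    have key : ∀ i, -2 ≤ y i ∧ y i ≤ 2 := by
      intro i
      have h1 : y i ^ 2 ≤ PohAux.Q y :=
        Finset.single_le_sum (f := fun j => y j ^ 2) (fun j _ => sq_nonneg _)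
          (Finset.mem_univ i)
      have h2 : PohAux.Q y < 1 := hy
      constructor <;> nlinarith
    exact ⟨fun i => (key i).1, fun i => (key i).2⟩
  rw [Set.inter_eq_self_of_subset_right hoBsub] at hzero
  -- lower bound for the integrand
  set cc : ℝ := lam - 2 * (((n+1 : ℕ) : ℝ) + 2) ^ 2 / 27 with hcc
  have hlamc : ((((n+1):ℕ):ℝ) + 2) ^ 2 / 8 < lam := hlam
  have hccpos : 0 < cc := by
    rw [hcc]
    nlinarith [sq_nonneg ((((n+1):ℕ):ℝ) + 2)]
  have hlow : ∀ y ∈ oB, cc * PohAux.Phi y ≤ g y := by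
    intro y hy
    have hQlt : PohAux.Q y < 1 := hy
    have hkey := PohAux.key_ineq (((n+1):ℕ):ℝ) lam (v y) (1 - PohAux.Q y)
      (by positivity) (hvnn y (oB_sub hy)) (hvlt1 y hy)
      (by linarith) (by linarith [PohAux.Q_nonneg y]) hlamc
    have he1 : 8 * (1 - (1 - PohAux.Q y)) - 4 * (((n+1):ℕ):ℝ) * (1 - PohAux.Q y)
        = 8 * PohAux.Q y - 4 * ((n+1 : ℕ) : ℝ) * (1 - PohAux.Q y) := by ring
    rw [he1] at hkey
    have he2 : PohAux.Phi y = (1 - PohAux.Q y) ^ 2 := rfl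
    simp only [hg]
    rw [he2, hcc]
    linarith [hkey]
  have hccPhiInt : IntegrableOn (fun y => cc * PohAux.Phi y) oB volume :=
    ((continuous_const.mul PohAux.Phi_continuous).continuousOn.integrableOn_compact
      cB_compact).mono_set oB_sub
  have hmono := MeasureTheory.setIntegral_mono_on hccPhiInt hIoB oB_meas hlow
  rw [hzero] at hmono
  rw [MeasureTheory.integral_const_mul] at hmono
  -- positivity of ∫ Phi over oB
  set r : ℝ := 1 / ((((n+1):ℕ):ℝ) + 1) with hr
  have hrpos : 0 < r := by rw [hr]; positivity
  set sB : Set (Fin (n+1) → ℝ) := ball (0 : Fin (n+1) → ℝ) r with hsB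
  have hrsmall : (((n+1):ℕ):ℝ) * r ^ 2 < 1 := by
    rw [hr, div_pow, one_pow, mul_one_div, div_lt_one (by positivity)]
    have hn : (0:ℝ) ≤ ((n+1:ℕ):ℝ) := by positivity
    nlinarith [hn]
  have hQsB : ∀ z ∈ sB, PohAux.Q z ≤ (((n+1):ℕ):ℝ) * r ^ 2 := by
    intro z hz
    rw [hsB, mem_ball_zero_iff] at hz
    have h1 : ∀ j ∈ Finset.univ (α := Fin (n+1)), z j ^ 2 ≤ r ^ 2 := by
      intro j _
      have h2 : |z j| ≤ ‖z‖ := by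
        have := norm_le_pi_norm z j
        simpa [Real.norm_eq_abs] using this
      nlinarith [abs_nonneg (z j), sq_abs (z j), norm_nonneg z]
    calc PohAux.Q z ≤ ∑ _j : Fin (n+1), r ^ 2 := Finset.sum_le_sum h1
      _ = (((n+1):ℕ):ℝ) * r ^ 2 := by
          rw [Finset.sum_const, Finset.card_univ, Fintype.card_fin, nsmul_eq_mul]
  have hsub : sB ⊆ oB := by
    intro z hz
    have := hQsB z hz
    show PohAux.Q z < 1
    linarith
  have hPhiIntoB : IntegrableOn (fun y => PohAux.Phi y) oB volume :=
    (PohAux.Phi_continuous.continuousOn.integrableOn_compact cB_compact).mono_set oB_sub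
  have hPhiInt_sB : IntegrableOn (fun y => PohAux.Phi y) sB volume :=
    hPhiIntoB.mono_set hsub
  have step1 : ∫ y in sB, PohAux.Phi y ≤ ∫ y in oB, PohAux.Phi y := by
    apply MeasureTheory.setIntegral_mono_set hPhiIntoB
    · exact Filter.Eventually.of_forall fun y => PohAux.Phi_nonneg y
    · exact HasSubset.Subset.eventuallyLE hsub
  set c0 : ℝ := (1 - (((n+1):ℕ):ℝ) * r ^ 2) ^ 2 with hc0
  have hc0pos : 0 < c0 := by
    rw [hc0]
    have : 0 < 1 - (((n+1):ℕ):ℝ) * r ^ 2 := by linarith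
    positivity
  have step2 : ∫ (_y : Fin (n+1) → ℝ) in sB, c0 ≤ ∫ y in sB, PohAux.Phi y := by
    apply MeasureTheory.setIntegral_mono_on
    · exact MeasureTheory.integrableOn_const measure_ball_lt_top.ne
    · exact hPhiInt_sB
    · exact measurableSet_ball
    · intro y hy
      have h1 := hQsB y hy
      have h2 : 0 ≤ 1 - (((n+1):ℕ):ℝ) * r ^ 2 := by linarith
      have h3 : 1 - (((n+1):ℕ):ℝ) * r ^ 2 ≤ 1 - PohAux.Q y := by linarith
      rw [hc0]
      show (1 - (((n+1):ℕ):ℝ) * r ^ 2) ^ 2 ≤ (1 - PohAux.Q y) ^ 2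
      exact pow_le_pow_left₀ h2 h3 2
  have hvolpos : 0 < (volume sB).toReal := by
    rw [hsB]
    refine ENNReal.toReal_pos (measure_ball_pos volume 0 hrpos).ne' ?_
    exact measure_ball_lt_top.ne
  have hconst : ∫ (_y : Fin (n+1) → ℝ) in sB, c0 = (volume sB).toReal * c0 := by
    rw [MeasureTheory.setIntegral_const, smul_eq_mul]
    rfl
  have hPhipos : 0 < ∫ y in oB, PohAux.Phi y := by
    have := mul_pos hvolpos hc0pos
    linarith [step1, step2, hconst.ge, hconst.le]
  nlinarith [mul_pos hccpos hPhipos]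
end

section
/- Define △(N, α) = −8α² − (24N − 16)α + 9N² − 84N + 100 for real N and α. Then: (i) for every natural number N with 2 ≤ N ≤ 7 and every real α ≥ 0, △(N, α) < 0; (ii) for every natural number N ≥ 8, the number α** = (4 − 6N + 3√6 (N − 2))/4 satisfies α** ≥ 0, and for every real α ≥ 0 one has △(N, α) ≥ 0 if and only if α ≤ α**. (The identity (24N−16)² + 32(9N²−84N+100) = 864(N−2)² underlies the explicit formula for α**.) -/
/-!
Since `(24N − 16)² + 32 (9N² − 84N + 100) = 864 (N − 2)²`, the downward parabola `△(N, ·)` factors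
as `-8 (α - α₊) (α - α₋)` with `α± = (4 - 6N ± 3√6 (N - 2)) / 4`. For `N ≥ 2` the lower root is
negative, so on `α ≥ 0` the sign of `△` is that of `α₊ - α`. For `2 ≤ N ≤ 7` all coefficients of
`△(N, ·)` are nonpositive and the constant one is negative, while for `N ≥ 8` the bound
`√6 ≥ 22/9` makes `α₊ = α**` nonnegative.
-/

/-- The discriminant quantity `△(N, α) = −8α² − (24N − 16)α + 9N² − 84N + 100`. -/
noncomputable def discr (N α : ℝ) : ℝ :=
  -8 * α ^ 2 - (24 * N - 16) * α + 9 * N ^ 2 - 84 * N + 100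

namespace Discr

/-- The larger root of `△(N, ·)`; this is the paper's `α**`. -/
noncomputable def upperRoot (N : ℝ) : ℝ := (4 - 6 * N + 3 * Real.sqrt 6 * (N - 2)) / 4

noncomputable def lowerRoot (N : ℝ) : ℝ := (4 - 6 * N - 3 * Real.sqrt 6 * (N - 2)) / 4

variable {N α : ℝ}

theorem discr_eq_mul (N α : ℝ) :
    discr N α = -8 * (α - upperRoot N) * (α - lowerRoot N) := by
  have hs : Real.sqrt 6 ^ 2 = 6 := Real.sq_sqrt (by norm_num)
  unfold discr upperRoot lowerRoot
  linear_combination (-(9 / 2) * (N - 2) ^ 2) * hs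

theorem discr_neg (hN₂ : 2 ≤ N) (hN₇ : N ≤ 7) (hα : 0 ≤ α) : discr N α < 0 := by
  have hconst : 9 * N ^ 2 - 84 * N + 100 < 0 := by nlinarith
  have hlin : 0 ≤ (24 * N - 16) * α := mul_nonneg (by linarith) hα
  unfold discr
  nlinarith [sq_nonneg α]

theorem lowerRoot_neg (hN : 2 ≤ N) : lowerRoot N < 0 := by
  have : 0 ≤ Real.sqrt 6 * (N - 2) := mul_nonneg (Real.sqrt_nonneg 6) (by linarith)
  unfold lowerRoot
  linarith

theorem upperRoot_nonneg (hN : 8 ≤ N) : 0 ≤ upperRoot N := by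
  have hs : (22 / 9 : ℝ) ≤ Real.sqrt 6 := Real.le_sqrt_of_sq_le (by norm_num)
  have : 22 / 9 * (N - 2) ≤ Real.sqrt 6 * (N - 2) := mul_le_mul_of_nonneg_right hs (by linarith)
  unfold upperRoot
  linarith

theorem discr_nonneg_iff (hN : 2 ≤ N) (hα : 0 ≤ α) : 0 ≤ discr N α ↔ α ≤ upperRoot N := by
  have hlower : 0 < α - lowerRoot N := by linarith [lowerRoot_neg hN]
  rw [discr_eq_mul, mul_nonneg_iff_of_pos_right hlower]
  constructor <;> intro h <;> linarith

end Discr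

open Discr in
theorem discriminant_sign :
    (∀ N : ℕ, 2 ≤ N → N ≤ 7 → ∀ α : ℝ, 0 ≤ α → discr N α < 0) ∧
    (∀ N : ℕ, 8 ≤ N →
      0 ≤ (4 - 6 * (N : ℝ) + 3 * Real.sqrt 6 * ((N : ℝ) - 2)) / 4 ∧
      ∀ α : ℝ, 0 ≤ α →
        (0 ≤ discr N α ↔
          α ≤ (4 - 6 * (N : ℝ) + 3 * Real.sqrt 6 * ((N : ℝ) - 2)) / 4)) := by
  refine ⟨fun N h₂ h₇ α hα => discr_neg (by exact_mod_cast h₂) (by exact_mod_cast h₇) hα,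
    fun N h₈ => ?_⟩
  have h₈' : (8 : ℝ) ≤ N := by exact_mod_cast h₈
  exact ⟨upperRoot_nonneg h₈', fun α hα => discr_nonneg_iff (by linarith) hα⟩
end
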